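/- Let U be a unitary matrix of order N², with rows and columns indexed by pairs in {1,…,N}². Then the reshuffled matrix U^R has rank 1 if and only if U is a product gate, i.e., there exist unitary N×N matrices U_A and U_B such that U = U_A ⊗ U_B (Kronecker product). -/

import Mathlib

/-!
Reshuffling is injective and sends `A ⊗ₖ B` to `vec A (vec B)ᵀ`, so `U^R` has rank at most one
exactly when `U = A ⊗ₖ B` for some (not necessarily unitary) `A`, `B`. If `A ⊗ₖ B` is
unitary then `(AᴴA) ⊗ₖ (BᴴB) = 1`, which forces `AᴴA = c • 1` and `BᴴB = c⁻¹ • 1`; since `AᴴA` is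
positive semidefinite, `c > 0`, and `(√c)⁻¹ • A`, `√c • B` are unitary with the same Kronecker
product.
-/

open Matrix Kronecker

/-- Reshuffling of a matrix acting on a bipartite index set:
`(X^R)_{(m,μ),(n,ν)} = X_{(m,n),(μ,ν)}`. -/
def reshuffle {N : ℕ} (X : Matrix (Fin N × Fin N) (Fin N × Fin N) ℂ) :
    Matrix (Fin N × Fin N) (Fin N × Fin N) ℂ :=
  Matrix.of fun p q => X (p.1, q.1) (p.2, q.2)

open scoped ComplexOrder

namespace Matrix

variable {m n R K 𝕜 : Type*}

theorem rank_eq_zero_iff [Fintype n] [Field K] {A : Matrix m n K} : A.rank = 0 ↔ A = 0 := by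
  classical
  rw [rank, Submodule.finrank_eq_zero, LinearMap.range_eq_bot, ← toLin'_apply',
    LinearEquiv.map_eq_zero_iff]

theorem rank_vecMulVec_eq_one [Fintype n] [Field K] {v : m → K} {w : n → K} (hv : v ≠ 0)
    (hw : w ≠ 0) : (vecMulVec v w).rank = 1 :=
  (rank_vecMulVec_le v w).antisymm <| Nat.one_le_iff_ne_zero.mpr <| rank_eq_zero_iff.not.mpr
    fun h => by
      obtain ⟨i, hi⟩ := Function.ne_iff.mp hv
      obtain ⟨j, hj⟩ := Function.ne_iff.mp hw
      exact mul_ne_zero hi hj congr($h i j)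

theorem exists_eq_vecMulVec_of_rank_le_one [Fintype n] [Field K] {A : Matrix m n K}
    (h : A.rank ≤ 1) : ∃ v w, A = vecMulVec v w := by
  classical
  rw [rank, finrank_le_one_iff] at h
  obtain ⟨v, hv⟩ := h
  choose w hw using fun j => hv ⟨A *ᵥ Pi.single j 1, LinearMap.mem_range_self A.mulVecLin _⟩
  refine ⟨v, w, ext fun i j => ?_⟩
  simpa [mulVec_single_one, vecMulVec_apply, mul_comm] using (congr_fun congr($(hw j).1) i).symm

theorem exists_smul_one_of_kronecker_eq_one [Field K] [DecidableEq m] [DecidableEq n]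
    [Nonempty m] [Nonempty n] {X : Matrix m m K} {Y : Matrix n n K} (h : X ⊗ₖ Y = 1) :
    ∃ c : K, c ≠ 0 ∧ X = c • 1 ∧ Y = c⁻¹ • 1 := by
  obtain ⟨i₀⟩ := ‹Nonempty m›
  obtain ⟨j₀⟩ := ‹Nonempty n›
  rw [← one_kronecker_one] at h
  have entry : ∀ i i' j j', X i i' * Y j j' = (1 : Matrix m m K) i i' * (1 : Matrix n n K) j j' :=
    fun i i' j j' => congr_fun₂ h (i, j) (i', j')
  have h₀ : X i₀ i₀ * Y j₀ j₀ = 1 := by simpa using entry i₀ i₀ j₀ j₀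
  have hY₀ : Y j₀ j₀ ≠ 0 := right_ne_zero_of_mul_eq_one h₀
  refine ⟨(Y j₀ j₀)⁻¹, inv_ne_zero hY₀, ext fun i i' => ?_, ext fun j j' => ?_⟩
  · rw [smul_apply, smul_eq_mul, eq_inv_mul_iff_mul_eq₀ hY₀, mul_comm, entry, one_apply_eq,
      mul_one]
  · calc Y j j' = (X i₀ i₀ * Y j₀ j₀) * Y j j' := by rw [h₀, one_mul]
      _ = Y j₀ j₀ * (X i₀ i₀ * Y j j') := by ring
      _ = ((Y j₀ j₀)⁻¹⁻¹ • (1 : Matrix n n K)) j j' := by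
        rw [entry, one_apply_eq, one_mul, inv_inv, smul_apply, smul_eq_mul]

theorem smul_mem_unitaryGroup_of_conjTranspose_mul_self_eq [Fintype n] [DecidableEq n]
    [CommRing R] [StarRing R] {A : Matrix n n R} {c s : R} (hA : Aᴴ * A = c • 1)
    (hs : star s * s * c = 1) : s • A ∈ unitaryGroup n R := by
  rw [mem_unitaryGroup_iff', star_smul, star_eq_conjTranspose, smul_mul, Matrix.mul_smul, hA,
    smul_smul, smul_smul, hs, one_smul]

theorem nonneg_of_conjTranspose_mul_self_eq_smul_one [Fintype m] [Fintype n] [DecidableEq n]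
    [Nonempty n] [RCLike 𝕜] {A : Matrix m n 𝕜} {c : 𝕜} (hA : Aᴴ * A = c • 1) : 0 ≤ c := by
  obtain ⟨j⟩ := ‹Nonempty n›
  simpa [hA] using (posSemidef_conjTranspose_mul_self A).diag_nonneg (i := j)

theorem exists_kronecker_eq_of_kronecker_mem_unitaryGroup [Fintype m] [Fintype n] [DecidableEq m]
    [DecidableEq n] [Nonempty m] [Nonempty n] [RCLike 𝕜] {A : Matrix m m 𝕜} {B : Matrix n n 𝕜}
    (h : A ⊗ₖ B ∈ unitaryGroup (m × n) 𝕜) :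
    ∃ A' B', A' ∈ unitaryGroup m 𝕜 ∧ B' ∈ unitaryGroup n 𝕜 ∧ A ⊗ₖ B = A' ⊗ₖ B' := by
  have hAB : (Aᴴ * A) ⊗ₖ (Bᴴ * B) = 1 := by
    rw [mul_kronecker_mul, ← conjTranspose_kronecker, ← star_eq_conjTranspose]
    exact mem_unitaryGroup_iff'.mp h
  obtain ⟨c, hc, hA, hB⟩ := exists_smul_one_of_kronecker_eq_one hAB
  obtain ⟨r, hr, rfl⟩ := RCLike.pos_iff_exists_ofReal.mp
    ((nonneg_of_conjTranspose_mul_self_eq_smul_one hA).lt_of_ne' hc)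
  set s : 𝕜 := ((√r : ℝ) : 𝕜)
  have hs : star s = s := RCLike.conj_ofReal _
  have hss : s * s = r := by simp only [s, ← RCLike.ofReal_mul, Real.mul_self_sqrt hr.le]
  have hs₀ : s ≠ 0 := RCLike.ofReal_ne_zero.mpr (Real.sqrt_pos.mpr hr).ne'
  refine ⟨s⁻¹ • A, s • B, smul_mem_unitaryGroup_of_conjTranspose_mul_self_eq hA ?_,
    smul_mem_unitaryGroup_of_conjTranspose_mul_self_eq hB ?_, ?_⟩
  · rw [star_inv₀, hs, ← mul_inv, hss, inv_mul_cancel₀ hc]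
  · rw [hs, hss, mul_inv_cancel₀ hc]
  · rw [smul_kronecker, kronecker_smul, smul_smul, inv_mul_cancel₀ hs₀, one_smul]

end Matrix

section

variable {N : ℕ}

theorem reshuffle_injective : Function.Injective (reshuffle (N := N)) :=
  fun _ _ h => ext fun p q => congr_fun₂ h (p.1, q.1) (p.2, q.2)

theorem reshuffle_kronecker (A B : Matrix (Fin N) (Fin N) ℂ) :
    reshuffle (A ⊗ₖ B) = vecMulVec (fun p => A p.1 p.2) (fun p => B p.1 p.2) :=
  rfl

theorem eq_kronecker_of_reshuffle_eq_vecMulVec {X : Matrix (Fin N × Fin N) (Fin N × Fin N) ℂ}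
    {v w : Fin N × Fin N → ℂ} (h : reshuffle X = vecMulVec v w) :
    X = of (fun m n => v (m, n)) ⊗ₖ of (fun μ ν => w (μ, ν)) :=
  reshuffle_injective <| h.trans
    (reshuffle_kronecker (of fun m n => v (m, n)) (of fun μ ν => w (μ, ν))).symm

end

theorem reshuffle_rank_one_iff_product_gate (N : ℕ) (hN : 0 < N)
    (U : Matrix (Fin N × Fin N) (Fin N × Fin N) ℂ)
    (hU : U ∈ Matrix.unitaryGroup (Fin N × Fin N) ℂ) :
    (reshuffle U).rank = 1 ↔
      ∃ UA UB : Matrix (Fin N) (Fin N) ℂ,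
        UA ∈ Matrix.unitaryGroup (Fin N) ℂ ∧ UB ∈ Matrix.unitaryGroup (Fin N) ℂ ∧
        U = UA ⊗ₖ UB := by
  have : Nonempty (Fin N) := ⟨⟨0, hN⟩⟩
  constructor
  · intro h
    obtain ⟨v, w, hvw⟩ := exists_eq_vecMulVec_of_rank_le_one h.le
    rw [eq_kronecker_of_reshuffle_eq_vecMulVec hvw] at hU ⊢
    exact exists_kronecker_eq_of_kronecker_mem_unitaryGroup hU
  · rintro ⟨UA, UB, hA, hB, rfl⟩
    have vec_ne_zero {V : Matrix (Fin N) (Fin N) ℂ} (hV : V ∈ unitaryGroup (Fin N) ℂ) :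
        (fun p : Fin N × Fin N => V p.1 p.2) ≠ 0 := fun h0 =>
      (Unitary.isUnit_coe (U := ⟨V, hV⟩)).ne_zero (ext fun i j => congr_fun h0 (i, j))
    rw [reshuffle_kronecker]
    exact rank_vecMulVec_eq_one (vec_ne_zero hA) (vec_ne_zero hB)
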